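/- arXiv:2012.15133 — 6 statements merged into one kernel-verified Lean document; each statement's English description precedes it below -/
import Mathlib

section
/- Let V be a finite-dimensional real inner product space, let Δ : V →ₗ[ℝ] V be self-adjoint with ⟪v, Δ v⟫ ≤ 0 for all v ∈ V, let a > 0, let L := a·id + Δ∘Δ, let dt > 0, and let A := (3/2)·id − dt·(Δ∘L). Then for every m ∈ V one has ⟪A m, Δ m⟫ ≤ 0; equivalently, since A is bijective, ⟪n, A⁻¹(Δ n)⟫ ≤ 0 for every n ∈ V. -/
/-!
Write `A = c - dt·Δ∘(a + Δ²)`. For `m ∈ V`,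
`⟪A m, Δ m⟫ = c⟪m, Δ m⟫ - dt(a‖Δ m‖² + ‖Δ² m‖²) ≤ 0`, and `⟪v, A v⟫ ≥ c‖v‖²` because `Δ` and `Δ³`
are nonpositive, so `A` is injective, hence bijective in finite dimension. As a polynomial in `Δ`,
`A` commutes with `Δ`, so `A v = Δ n` with `n = A w` forces `v = Δ w` and `⟪n, v⟫ = ⟪A w, Δ w⟫ ≤ 0`.
-/

section

variable {V : Type*} [NormedAddCommGroup V] [InnerProductSpace ℝ V]

/-- The scheme operator `A_N` is `savOperator (3/2) a Δt Δ_N`. -/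
def savOperator (c a dt : ℝ) (Δ : V →ₗ[ℝ] V) : V →ₗ[ℝ] V :=
  c • LinearMap.id - dt • (Δ ∘ₗ (a • LinearMap.id + Δ ∘ₗ Δ))

theorem savOperator_apply (c a dt : ℝ) (Δ : V →ₗ[ℝ] V) (v : V) :
    savOperator c a dt Δ v = c • v - dt • (a • Δ v + Δ (Δ (Δ v))) := by
  simp [savOperator]

theorem commute_savOperator (c a dt : ℝ) (Δ : V →ₗ[ℝ] V) : Commute (savOperator c a dt Δ) Δ :=
  LinearMap.ext fun v => by simp [savOperator_apply]

theorem injective_of_forall_inner_map_self_pos {T : V →ₗ[ℝ] V}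
    (h : ∀ v ≠ 0, 0 < inner ℝ v (T v)) : Function.Injective T := by
  refine (injective_iff_map_eq_zero T).mpr fun v hv => ?_
  by_contra hne
  simpa [hv] using h v hne

section Symmetric

variable {Δ : V →ₗ[ℝ] V} (hΔ : Δ.IsSymmetric)
include hΔ

theorem LinearMap.IsSymmetric.inner_map_map_self (v : V) : inner ℝ (Δ (Δ v)) v = ‖Δ v‖ ^ 2 := by
  rw [hΔ, real_inner_self_eq_norm_sq]

theorem LinearMap.IsSymmetric.inner_self_map_map_map_nonpos
    (hneg : ∀ v : V, inner ℝ v (Δ v) ≤ 0) (v : V) : inner ℝ v (Δ (Δ (Δ v))) ≤ 0 := by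
  rw [← hΔ]
  exact hneg (Δ v)

theorem LinearMap.IsSymmetric.inner_savOperator_apply_map_nonpos {c a dt : ℝ}
    (hc : 0 ≤ c) (ha : 0 ≤ a) (hdt : 0 ≤ dt) (hneg : ∀ v : V, inner ℝ v (Δ v) ≤ 0) (m : V) :
    inner ℝ (savOperator c a dt Δ m) (Δ m) ≤ 0 := by
  have hLΔ : 0 ≤ inner ℝ (a • Δ m + Δ (Δ (Δ m))) (Δ m) := by
    rw [inner_add_left, real_inner_smul_left, real_inner_self_eq_norm_sq, hΔ.inner_map_map_self]
    positivity
  rw [savOperator_apply, inner_sub_left, real_inner_smul_left, real_inner_smul_left]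
  nlinarith [hneg m, mul_nonneg hdt hLΔ]

theorem LinearMap.IsSymmetric.injective_savOperator {c a dt : ℝ}
    (hc : 0 < c) (ha : 0 ≤ a) (hdt : 0 ≤ dt) (hneg : ∀ v : V, inner ℝ v (Δ v) ≤ 0) :
    Function.Injective (savOperator c a dt Δ) := by
  refine injective_of_forall_inner_map_self_pos fun v hv => ?_
  have hB : inner ℝ v (a • Δ v + Δ (Δ (Δ v))) ≤ 0 := by
    rw [inner_add_right, real_inner_smul_right]
    nlinarith [hneg v, hΔ.inner_self_map_map_map_nonpos hneg v]
  rw [savOperator_apply, inner_sub_right, real_inner_smul_right, real_inner_smul_right,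
    real_inner_self_eq_norm_sq]
  have hv_sq : 0 < ‖v‖ ^ 2 := by positivity
  nlinarith [mul_nonneg hdt (neg_nonneg.mpr hB)]

end Symmetric

theorem inner_nonpos_of_apply_eq_map [FiniteDimensional ℝ V] {A Δ : V →ₗ[ℝ] V}
    (hA : Function.Injective A) (hcomm : Commute A Δ) (h : ∀ m, inner ℝ (A m) (Δ m) ≤ 0)
    {n v : V} (hv : A v = Δ n) : inner ℝ n v ≤ 0 := by
  obtain ⟨w, rfl⟩ := LinearMap.injective_iff_surjective.mp hA n
  obtain rfl : v = Δ w := hA (hv.trans (LinearMap.congr_fun hcomm w).symm)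
  exact h w

end

/-- Nonpositivity `⟪A m, Δ m⟫ ≤ 0` for the SAV scheme operator
`A = (3/2)·id − dt·Δ∘L`, and equivalently `⟪n, A⁻¹(Δ n)⟫ ≤ 0`
(expressed via `A v = Δ n`). -/
theorem sav_operator_inverse_laplacian_nonpositive
    {V : Type*} [NormedAddCommGroup V] [InnerProductSpace ℝ V]
    [FiniteDimensional ℝ V]
    (Δ : V →ₗ[ℝ] V) (hΔsym : Δ.IsSymmetric)
    (hΔneg : ∀ v : V, (inner ℝ v (Δ v) : ℝ) ≤ 0)
    (a : ℝ) (ha : 0 < a)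
    (L : V →ₗ[ℝ] V) (hL : L = a • LinearMap.id + Δ ∘ₗ Δ)
    (dt : ℝ) (hdt : 0 < dt)
    (A : V →ₗ[ℝ] V) (hA : A = ((3:ℝ)/2) • LinearMap.id - dt • (Δ ∘ₗ L)) :
    (∀ m : V, (inner ℝ (A m) (Δ m) : ℝ) ≤ 0) ∧
      (∀ n v : V, A v = Δ n → (inner ℝ n v : ℝ) ≤ 0) := by
  subst hA hL
  have key :=
    hΔsym.inner_savOperator_apply_map_nonpos (c := 3 / 2) (by norm_num) ha.le hdt.le hΔneg
  have hinj := hΔsym.injective_savOperator (c := 3 / 2) (by norm_num) ha.le hdt.le hΔneg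
  exact ⟨key, fun _ _ => inner_nonpos_of_apply_eq_map hinj (commute_savOperator _ _ _ Δ) key⟩
end

section
/- Let V be a finite-dimensional real inner product space, let Δ : V →ₗ[ℝ] V be self-adjoint, let w ∈ V satisfy Δ w = 0, and let dt > 0. Suppose φ : ℕ → V and μ : ℕ → V are sequences such that for every n, (3/2)·φ(n+2) − 2·φ(n+1) + (1/2)·φ(n) = dt·Δ(μ(n+2)), and suppose ⟪w, φ(0)⟫ = ⟪w, φ(1)⟫ = β for some β ∈ ℝ. Then ⟪w, φ(n)⟫ = β for every n. -/
/-! Pairing the scheme with `w` kills its right-hand side, since `⟪w, Δ μ⟫ = ⟪Δ w, μ⟫ = 0`. The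
masses `⟪w, φ n⟫` therefore satisfy a two-step recurrence whose coefficients `3/2 - 2 + 1/2` sum
to zero, so constants solve it and equal initial masses are propagated. -/

theorem LinearMap.IsSymmetric.inner_map_eq_zero_of_map_eq_zero {𝕜 E : Type*} [RCLike 𝕜]
    [NormedAddCommGroup E] [InnerProductSpace 𝕜 E] {T : E →ₗ[𝕜] E} (hT : T.IsSymmetric)
    {w : E} (hw : T w = 0) (v : E) : inner 𝕜 w (T v) = 0 := by
  rw [← hT w v, hw, inner_zero_left]

theorem const_of_linearRecurrence_of_coeff_sum_eq_zero {K : Type*} [Field K] {a : ℕ → K}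
    {c₀ c₁ c₂ : K} (hc₂ : c₂ ≠ 0) (hsum : c₂ + c₁ + c₀ = 0)
    (hrec : ∀ n, c₂ * a (n + 2) + c₁ * a (n + 1) + c₀ * a n = 0) (h₁ : a 1 = a 0) :
    ∀ n, a n = a 0 := by
  suffices h : ∀ n, a n = a 0 ∧ a (n + 1) = a 0 from fun n => (h n).1
  intro n
  induction n with
  | zero => exact ⟨rfl, h₁⟩
  | succ k ih =>
    refine ⟨ih.2, mul_left_cancel₀ hc₂ ?_⟩
    linear_combination hrec k - a 0 * hsum - c₁ * ih.2 - c₀ * ih.1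

theorem bdf2_mass_conservation_general
    {V : Type*} [NormedAddCommGroup V] [InnerProductSpace ℝ V]
    (Δ : V →ₗ[ℝ] V) (hΔsym : Δ.IsSymmetric)
    (w : V) (hw : Δ w = 0)
    (dt : ℝ)
    (φ μ : ℕ → V)
    (hscheme : ∀ n : ℕ,
      ((3:ℝ)/2) • φ (n+2) - (2:ℝ) • φ (n+1) + ((1:ℝ)/2) • φ n = dt • Δ (μ (n+2)))
    (β : ℝ)
    (h0 : (inner ℝ w (φ 0) : ℝ) = β)
    (h1 : (inner ℝ w (φ 1) : ℝ) = β) :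
    ∀ n : ℕ, (inner ℝ w (φ n) : ℝ) = β := by
  have hmass : ∀ n, (3 / 2 : ℝ) * inner ℝ w (φ (n + 2)) + (-2) * inner ℝ w (φ (n + 1))
      + 1 / 2 * inner ℝ w (φ n) = 0 := by
    intro n
    have h := congrArg (inner ℝ w) (hscheme n)
    simp only [inner_add_right, inner_sub_right, real_inner_smul_right,
      hΔsym.inner_map_eq_zero_of_map_eq_zero hw, mul_zero] at h
    linear_combination h
  intro n
  rw [← h0]
  refine const_of_linearRecurrence_of_coeff_sum_eq_zero (a := fun n => inner ℝ w (φ n)) ?_ ?_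
    hmass (h1.trans h0.symm) n <;> norm_num

/-- Mass conservation for the BDF2 scheme: the discrete mean `⟪w, φ(n)⟫`
is conserved in time provided the two initial data have equal mean. -/
theorem bdf2_mass_conservation
    {V : Type*} [NormedAddCommGroup V] [InnerProductSpace ℝ V]
    [FiniteDimensional ℝ V]
    (Δ : V →ₗ[ℝ] V) (hΔsym : Δ.IsSymmetric)
    (w : V) (hw : Δ w = 0)
    (dt : ℝ) (hdt : 0 < dt)
    (φ μ : ℕ → V)
    (hscheme : ∀ n : ℕ,
      ((3:ℝ)/2) • φ (n+2) - (2:ℝ) • φ (n+1) + ((1:ℝ)/2) • φ n = dt • Δ (μ (n+2)))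
    (β : ℝ)
    (h0 : (inner ℝ w (φ 0) : ℝ) = β)
    (h1 : (inner ℝ w (φ 1) : ℝ) = β) :
    ∀ n : ℕ, (inner ℝ w (φ n) : ℝ) = β :=
  bdf2_mass_conservation_general Δ hΔsym w hw dt φ μ hscheme β h0 h1
end

section
/- Let V be a finite-dimensional real inner product space, let Δ : V →ₗ[ℝ] V be self-adjoint, let a > 0, and let L := a·id + Δ∘Δ. Fix dt > 0, n̂ ∈ V, E > 0. Suppose φⁿ⁺¹, φⁿ, φⁿ⁻¹ ∈ V and rⁿ⁺¹, rⁿ, rⁿ⁻¹ ∈ ℝ satisfy (3/2)·φⁿ⁺¹ − 2·φⁿ + (1/2)·φⁿ⁻¹ = dt·Δ μ with μ := (rⁿ⁺¹/√E)·n̂ + L φⁿ⁺¹, and (3/2)·rⁿ⁺¹ − 2·rⁿ + (1/2)·rⁿ⁻¹ = (1/(2√E))·⟪n̂, (3/2)·φⁿ⁺¹ − 2·φⁿ + (1/2)·φⁿ⁻¹⟫. Define the modified energy ℰ(φ, ψ, r, s) := (1/4)·(⟪φ, L φ⟫ + ⟪2φ−ψ, L(2φ−ψ)⟫) + (1/2)·(r²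 + (2r−s)²). Then the exact energy identity holds: ℰ(φⁿ⁺¹, φⁿ, rⁿ⁺¹, rⁿ) − ℰ(φⁿ, φⁿ⁻¹, rⁿ, rⁿ⁻¹) = −(1/4)·⟪φⁿ⁺¹ − 2φⁿ + φⁿ⁻¹, L(φⁿ⁺¹ − 2φⁿ + φⁿ⁻¹)⟫ − (1/2)·(rⁿ⁺¹ − 2rⁿ + rⁿ⁻¹)² + dt·⟪Δ μ, μ⟫. -/
/-!
Testing the `φ`-equation with `μ` turns `dt ⟪Δ μ, μ⟫` into `⟪g, L φⁿ⁺¹⟫ + (rⁿ⁺¹/√E) ⟪n̂, g⟫`,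
where `g = (3/2) φⁿ⁺¹ - 2 φⁿ + (1/2) φⁿ⁻¹`, and the `r`-equation turns the second term into
`2 rⁿ⁺¹ ((3/2) rⁿ⁺¹ - 2 rⁿ + (1/2) rⁿ⁻¹)`. Both terms are then telescoped by the BDF2 identity
`2 B((3/2) u - 2 v + (1/2) w, u) = ½ (Q u + Q(2u - v)) - ½ (Q v + Q(2v - w)) + ½ Q(u - 2v + w)`
for a symmetric bilinear form `B` with `Q x = B x x`: for `B = ⟪·, L ·⟫` and for the product on `ℝ`.
-/

open LinearMap (BilinForm)

theorem LinearMap.BilinForm.IsSymm.two_mul_apply_bdf2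
    {R M : Type*} [Field R] [NeZero (2 : R)] [AddCommGroup M] [Module R M]
    {B : BilinForm R M} (hB : B.IsSymm) (u v w : M) :
    2 * B ((3 / 2 : R) • u - (2 : R) • v + (1 / 2 : R) • w) u
      = (B u u + B ((2 : R) • u - v) ((2 : R) • u - v)) / 2
        - (B v v + B ((2 : R) • v - w) ((2 : R) • v - w)) / 2
        + B (u - (2 : R) • v + w) (u - (2 : R) • v + w) / 2 := by
  simp only [map_add, map_sub, map_smul, LinearMap.add_apply, LinearMap.sub_apply,
    LinearMap.smul_apply, smul_eq_mul, hB.eq v u, hB.eq w u, hB.eq w v]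
  field_simp
  ring

theorem LinearMap.IsSymmetric.isSymm_innerₗ_compl₂
    {V : Type*} [NormedAddCommGroup V] [InnerProductSpace ℝ V]
    {T : V →ₗ[ℝ] V} (hT : T.IsSymmetric) : BilinForm.IsSymm ((innerₗ V).compl₂ T) :=
  ⟨fun x y => by
    simp only [LinearMap.compl₂_apply, innerₗ_apply_apply]
    rw [← hT, real_inner_comm]⟩

theorem LinearMap.IsSymmetric.smul_id_add_comp_self
    {V : Type*} [NormedAddCommGroup V] [InnerProductSpace ℝ V]
    {Δ : V →ₗ[ℝ] V} (hΔ : Δ.IsSymmetric) (a : ℝ) :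
    (a • LinearMap.id + Δ ∘ₗ Δ).IsSymmetric :=
  (LinearMap.IsSymmetric.id.smul (conj_trivial a)).add (hΔ.mul_of_commute hΔ (Commute.refl Δ))

theorem sav_scheme_energy_identity_general
    {V : Type*} [NormedAddCommGroup V] [InnerProductSpace ℝ V]
    (Δ : V →ₗ[ℝ] V) (hΔsym : Δ.IsSymmetric)
    (a : ℝ)
    (L : V →ₗ[ℝ] V) (hL : L = a • LinearMap.id + Δ ∘ₗ Δ)
    (dt : ℝ)
    (nhat : V) (E : ℝ)
    (φ1 φ0 φm1 : V) (r1 r0 rm1 : ℝ)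
    (μ : V)
    (hμ : μ = (r1 / Real.sqrt E) • nhat + L φ1)
    (hscheme1 : ((3:ℝ)/2) • φ1 - (2:ℝ) • φ0 + ((1:ℝ)/2) • φm1 = dt • Δ μ)
    (hscheme2 : (3/2) * r1 - 2 * r0 + (1/2) * rm1
        = (1 / (2 * Real.sqrt E)) *
          (inner ℝ nhat (((3:ℝ)/2) • φ1 - (2:ℝ) • φ0 + ((1:ℝ)/2) • φm1) : ℝ))
    (calE : V → V → ℝ → ℝ → ℝ)
    (hcalE : ∀ (φ ψ : V) (r s : ℝ),
      calE φ ψ r s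
        = (1/4) * ((inner ℝ φ (L φ) : ℝ)
            + (inner ℝ ((2:ℝ) • φ - ψ) (L ((2:ℝ) • φ - ψ)) : ℝ))
          + (1/2) * (r^2 + (2*r - s)^2)) :
    calE φ1 φ0 r1 r0 - calE φ0 φm1 r0 rm1
      = -(1/4) * (inner ℝ (φ1 - (2:ℝ) • φ0 + φm1) (L (φ1 - (2:ℝ) • φ0 + φm1)) : ℝ)
        - (1/2) * (r1 - 2*r0 + rm1)^2
        + dt * (inner ℝ (Δ μ) μ : ℝ) := by
  have hLsym : L.IsSymmetric := hL ▸ hΔsym.smul_id_add_comp_self a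
  have hφ := hLsym.isSymm_innerₗ_compl₂.two_mul_apply_bdf2 φ1 φ0 φm1
  simp only [LinearMap.compl₂_apply, innerₗ_apply_apply] at hφ
  set g := ((3:ℝ)/2) • φ1 - (2:ℝ) • φ0 + ((1:ℝ)/2) • φm1
  have hdiss : dt * inner ℝ (Δ μ) μ
      = inner ℝ g (L φ1) + 2 * r1 * ((3/2) * r1 - 2 * r0 + (1/2) * rm1) :=
    calc dt * inner ℝ (Δ μ) μ = inner ℝ g μ := by rw [hscheme1, real_inner_smul_left]
      _ = inner ℝ g (L φ1) + r1 / Real.sqrt E * inner ℝ nhat g := by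
        rw [hμ, inner_add_right, real_inner_smul_right, real_inner_comm g, add_comm]
      _ = _ := by rw [hscheme2]; ring
  rw [hcalE, hcalE, hdiss]
  linear_combination -hφ / 2

/-- Exact energy dissipation identity for the BDF2 SAV scheme
(proof of Theorem 3.1), with modified energy
`ℰ(φ, ψ, r, s) = (1/4)(⟪φ, Lφ⟫ + ⟪2φ−ψ, L(2φ−ψ)⟫) + (1/2)(r² + (2r−s)²)`. -/
theorem sav_scheme_energy_identity
    {V : Type*} [NormedAddCommGroup V] [InnerProductSpace ℝ V]
    [FiniteDimensional ℝ V]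
    (Δ : V →ₗ[ℝ] V) (hΔsym : Δ.IsSymmetric)
    (a : ℝ) (ha : 0 < a)
    (L : V →ₗ[ℝ] V) (hL : L = a • LinearMap.id + Δ ∘ₗ Δ)
    (dt : ℝ) (hdt : 0 < dt)
    (nhat : V) (E : ℝ) (hE : 0 < E)
    (φ1 φ0 φm1 : V) (r1 r0 rm1 : ℝ)
    (μ : V)
    (hμ : μ = (r1 / Real.sqrt E) • nhat + L φ1)
    (hscheme1 : ((3:ℝ)/2) • φ1 - (2:ℝ) • φ0 + ((1:ℝ)/2) • φm1 = dt • Δ μ)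
    (hscheme2 : (3/2) * r1 - 2 * r0 + (1/2) * rm1
        = (1 / (2 * Real.sqrt E)) *
          (inner ℝ nhat (((3:ℝ)/2) • φ1 - (2:ℝ) • φ0 + ((1:ℝ)/2) • φm1) : ℝ))
    (calE : V → V → ℝ → ℝ → ℝ)
    (hcalE : ∀ (φ ψ : V) (r s : ℝ),
      calE φ ψ r s
        = (1/4) * ((inner ℝ φ (L φ) : ℝ)
            + (inner ℝ ((2:ℝ) • φ - ψ) (L ((2:ℝ) • φ - ψ)) : ℝ))
          + (1/2) * (r^2 + (2*r - s)^2)) :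
    calE φ1 φ0 r1 r0 - calE φ0 φm1 r0 rm1
      = -(1/4) * (inner ℝ (φ1 - (2:ℝ) • φ0 + φm1) (L (φ1 - (2:ℝ) • φ0 + φm1)) : ℝ)
        - (1/2) * (r1 - 2*r0 + rm1)^2
        + dt * (inner ℝ (Δ μ) μ : ℝ) :=
  sav_scheme_energy_identity_general Δ hΔsym a L hL dt nhat E φ1 φ0 φm1 r1 r0 rm1 μ hμ hscheme1
    hscheme2 calE hcalE
end

section
/- Let V be a finite-dimensional real inner product space, let Δ : V →ₗ[ℝ] V be self-adjoint with ⟪v, Δ v⟫ ≤ 0 for all v ∈ V, let a > 0, and let L := a·id + Δ∘Δ. Fix dt > 0, n̂ ∈ V, E > 0. Suppose φⁿ⁺¹, φⁿ, φⁿ⁻¹ ∈ V and rⁿ⁺¹, rⁿ, rⁿ⁻¹ ∈ ℝ satisfy (3/2)·φⁿ⁺¹ − 2·φⁿ + (1/2)·φⁿ⁻¹ = dt·Δ( (rⁿ⁺¹/√E)·n̂ + L φⁿ⁺¹ ) and (3/2)·rⁿ⁺¹ − 2·rⁿ + (1/2)·rⁿ⁻¹ = (1/(2√E))·⟪n̂,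 (3/2)·φⁿ⁺¹ − 2·φⁿ + (1/2)·φⁿ⁻¹⟫. Define ℰ(φ, ψ, r, s) := (1/4)·(⟪φ, L φ⟫ + ⟪2φ−ψ, L(2φ−ψ)⟫) + (1/2)·(r² + (2r−s)²). Then ℰ(φⁿ⁺¹, φⁿ, rⁿ⁺¹, rⁿ) ≤ ℰ(φⁿ, φⁿ⁻¹, rⁿ, rⁿ⁻¹). -/
/-!
Test the first scheme equation against the chemical potential
`μ = (r¹/√E) n̂ + L φ¹`: since `Δ ≤ 0`, `⟪μ, g⟫ = dt ⟪μ, Δμ⟫ ≤ 0`, where `g` is the BDF2 difference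
of `φ`. The second equation turns the `n̂`-part of `⟪μ, g⟫` into `2 r¹` times the BDF2 difference of
`r`. For any positive semidefinite symmetric form `B` the identity
`B(u, (3/2)u - 2v + (1/2)w) = ℰ(u, v) - ℰ(v, w) + (1/4) B(u - 2v + w, u - 2v + w)`, `ℰ = B.bdf2Energy`,
bounds such a pairing below by the energy decrease; apply it to `⟪·, L ·⟫` (`L ≥ 0` as `a ≥ 0`) and
to the product on `ℝ`.
-/

open LinearMap

namespace LinearMap

variable {K M : Type*} [Field K] [AddCommGroup M] [Module K M]

def BilinForm.bdf2Energy (B : LinearMap.BilinForm K M) (u v : M) : K :=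
  (1 / 4) * (B u u + B ((2 : K) • u - v) ((2 : K) • u - v))

theorem IsSymm.apply_bdf2 [CharZero K] {B : LinearMap.BilinForm K M} (hB : IsSymm B) (u v w : M) :
    B u ((3 / 2 : K) • u - (2 : K) • v + (1 / 2 : K) • w)
      = B.bdf2Energy u v - B.bdf2Energy v w
        + (1 / 4) * B (u - (2 : K) • v + w) (u - (2 : K) • v + w) := by
  simp only [BilinForm.bdf2Energy, map_add, map_sub, map_smul, add_apply, sub_apply, smul_apply,
    smul_eq_mul, ← hB.eq v u, ← hB.eq w u, ← hB.eq w v, RingHom.id_apply]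
  ring

theorem IsPosSemidef.bdf2Energy_sub_le [LinearOrder K] [IsStrictOrderedRing K]
    {B : LinearMap.BilinForm K M} (hB : IsPosSemidef B) (u v w : M) :
    B.bdf2Energy u v - B.bdf2Energy v w
      ≤ B u ((3 / 2 : K) • u - (2 : K) • v + (1 / 2 : K) • w) := by
  rw [hB.isSymm.apply_bdf2]
  have := hB.isNonneg.nonneg (u - (2 : K) • v + w)
  linarith

end LinearMap

section InnerProductSpace

variable {𝕜 E : Type*} [RCLike 𝕜] [NormedAddCommGroup E] [InnerProductSpace 𝕜 E]

theorem LinearMap.IsSymmetric.isPositive_comp_self {T : E →ₗ[𝕜] E} (hT : T.IsSymmetric) :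
    (T ∘ₗ T).IsPositive :=
  ⟨fun x y => by rw [comp_apply, comp_apply, hT, hT], fun x => by
    rw [comp_apply, hT]; exact inner_self_nonneg⟩

variable {V : Type*} [NormedAddCommGroup V] [InnerProductSpace ℝ V]

theorem LinearMap.IsPositive.isPosSemidef_innerₗ_compl₂ {T : V →ₗ[ℝ] V} (hT : T.IsPositive) :
    IsPosSemidef ((innerₗ V).compl₂ T) where
  eq x y := by simp [← hT.isSymmetric x y, real_inner_comm]
  nonneg x := by simpa using hT.inner_nonneg_right x

end InnerProductSpace

theorem sav_scheme_energy_stability_general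
    {V : Type*} [NormedAddCommGroup V] [InnerProductSpace ℝ V]
    (Δ : V →ₗ[ℝ] V) (hΔsym : Δ.IsSymmetric)
    (hΔneg : ∀ v : V, (inner ℝ v (Δ v) : ℝ) ≤ 0)
    (a : ℝ) (ha : 0 < a)
    (L : V →ₗ[ℝ] V) (hL : L = a • LinearMap.id + Δ ∘ₗ Δ)
    (dt : ℝ) (hdt : 0 < dt)
    (nhat : V) (E : ℝ) (hE : 0 < E)
    (φ1 φ0 φm1 : V) (r1 r0 rm1 : ℝ)
    (hscheme1 : ((3:ℝ)/2) • φ1 - (2:ℝ) • φ0 + ((1:ℝ)/2) • φm1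
        = dt • Δ ((r1 / Real.sqrt E) • nhat + L φ1))
    (hscheme2 : (3/2) * r1 - 2 * r0 + (1/2) * rm1
        = (1 / (2 * Real.sqrt E)) *
          (inner ℝ nhat (((3:ℝ)/2) • φ1 - (2:ℝ) • φ0 + ((1:ℝ)/2) • φm1) : ℝ))
    (calE : V → V → ℝ → ℝ → ℝ)
    (hcalE : ∀ (φ ψ : V) (r s : ℝ),
      calE φ ψ r s
        = (1/4) * ((inner ℝ φ (L φ) : ℝ)
            + (inner ℝ ((2:ℝ) • φ - ψ) (L ((2:ℝ) • φ - ψ)) : ℝ))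
          + (1/2) * (r^2 + (2*r - s)^2)) :
    calE φ1 φ0 r1 r0 ≤ calE φ0 φm1 r0 rm1 := by
  set g := ((3:ℝ)/2) • φ1 - (2:ℝ) • φ0 + ((1:ℝ)/2) • φm1
  set μ := (r1 / Real.sqrt E) • nhat + L φ1
  have hLpos : L.IsPositive :=
    hL ▸ (isPositive_id.smul_of_nonneg ha.le).add hΔsym.isPositive_comp_self
  have hdissipation : inner ℝ μ g ≤ 0 := by
    rw [hscheme1, real_inner_smul_right]
    exact mul_nonpos_of_nonneg_of_nonpos hdt.le (hΔneg μ)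
  have hsplit :
      inner ℝ μ g = 2 * r1 * ((3/2) * r1 - 2 * r0 + (1/2) * rm1) + inner ℝ φ1 (L g) := by
    rw [inner_add_left, real_inner_smul_left, hscheme2, hLpos.isSymmetric]
    field_simp [(Real.sqrt_pos.mpr hE).ne']
  have hφ := hLpos.isPosSemidef_innerₗ_compl₂.bdf2Energy_sub_le φ1 φ0 φm1
  have hr := (isPosSemidef_inner (E := ℝ)).bdf2Energy_sub_le r1 r0 rm1
  simp only [BilinForm.bdf2Energy, compl₂_apply, innerₗ_apply_apply, Real.inner_apply,
    smul_eq_mul] at hφ hr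
  rw [hcalE, hcalE]
  linarith

/-- Theorem 3.1: unconditional energy stability of the BDF2 SAV scheme —
the modified energy
`ℰ(φ, ψ, r, s) = (1/4)(⟪φ, Lφ⟫ + ⟪2φ−ψ, L(2φ−ψ)⟫) + (1/2)(r² + (2r−s)²)`
is non-increasing at each time step. -/
theorem sav_scheme_energy_stability
    {V : Type*} [NormedAddCommGroup V] [InnerProductSpace ℝ V]
    [FiniteDimensional ℝ V]
    (Δ : V →ₗ[ℝ] V) (hΔsym : Δ.IsSymmetric)
    (hΔneg : ∀ v : V, (inner ℝ v (Δ v) : ℝ) ≤ 0)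
    (a : ℝ) (ha : 0 < a)
    (L : V →ₗ[ℝ] V) (hL : L = a • LinearMap.id + Δ ∘ₗ Δ)
    (dt : ℝ) (hdt : 0 < dt)
    (nhat : V) (E : ℝ) (hE : 0 < E)
    (φ1 φ0 φm1 : V) (r1 r0 rm1 : ℝ)
    (hscheme1 : ((3:ℝ)/2) • φ1 - (2:ℝ) • φ0 + ((1:ℝ)/2) • φm1
        = dt • Δ ((r1 / Real.sqrt E) • nhat + L φ1))
    (hscheme2 : (3/2) * r1 - 2 * r0 + (1/2) * rm1
        = (1 / (2 * Real.sqrt E)) *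
          (inner ℝ nhat (((3:ℝ)/2) • φ1 - (2:ℝ) • φ0 + ((1:ℝ)/2) • φm1) : ℝ))
    (calE : V → V → ℝ → ℝ → ℝ)
    (hcalE : ∀ (φ ψ : V) (r s : ℝ),
      calE φ ψ r s
        = (1/4) * ((inner ℝ φ (L φ) : ℝ)
            + (inner ℝ ((2:ℝ) • φ - ψ) (L ((2:ℝ) • φ - ψ)) : ℝ))
          + (1/2) * (r^2 + (2*r - s)^2)) :
    calE φ1 φ0 r1 r0 ≤ calE φ0 φm1 r0 rm1 :=
  sav_scheme_energy_stability_general Δ hΔsym hΔneg a ha L hL dt hdt nhat E hE φ1 φ0 φm1 r1 r0 rm1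
    hscheme1 hscheme2 calE hcalE
end

section
/- Let V be a finite-dimensional real inner product space, let Δ : V →ₗ[ℝ] V be self-adjoint with ⟪v, Δ v⟫ ≤ 0 for all v ∈ V, let 0 < a ≤ 1, let L := a·id + Δ∘Δ, and let dt > 0. Suppose φ : ℕ → V, r : ℕ → ℝ are sequences such that for every n there exist n̂ₙ ∈ V and Eₙ > 0 with (3/2)·φ(n+2) − 2·φ(n+1) + (1/2)·φ(n) = dt·Δ( (r(n+2)/√Eₙ)·n̂ₙ + L φ(n+2) ) and (3/2)·r(n+2) − 2·r(n+1) + (1/2)·r(n) = (1/(2√Eₙ))·⟪n̂ₙ, (3/2)·φ(n+2) − 2·φ(n+1) + (1/2)·φ(n)⟫. Suppose further the initial modified energy satisfies (1/4)·(⟪φ(1), L φ(1)⟫ + ⟪2φ(1)−φ(0), L(2φ(1)−φ(0))⟫) + (1/2)·(r(1)² + (2r(1)−r(0))²) ≤ C̃₀. Then for every m ≥ 1: (i) a·‖φ(m)‖² + ‖Δ φ(m)‖² ≤ 4·C̃₀; (ii) r(m)² ≤ 2·C̃₀; and (iii) ‖φ(m)‖² − ⟪φ(m), Δ φ(m)⟫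 + ‖Δ φ(m)‖² ≤ 6·C̃₀/a. -/
/-!
Write BDF2 u = (3/2) u(n+2) - 2 u(n+1) + (1/2) u(n). Pairing the φ-equation with
μ = (r(n+2)/√E) n̂ + L φ(n+2) gives ⟪BDF2 φ, μ⟫ = dt ⟪Δμ, μ⟫ ≤ 0.
By the r-equation the n̂-part of this pairing is 2 r(n+2) · BDF2 r, and for symmetric L both
⟪BDF2 φ, L φ(n+2)⟫ and 2 r(n+2) · BDF2 r telescope up to non-negative second-difference remainders
(the standard BDF2 identity). Hence the modified energy is non-increasing and stays below C̃₀;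
dropping non-negative terms gives (i) and (ii), and (iii) follows from (i) because
-2⟪φ, Δφ⟫ ≤ ‖φ‖² + ‖Δφ‖² and a ≤ 1.
-/

open RealInnerProductSpace

namespace LinearMap

variable {V : Type*} [NormedAddCommGroup V] [InnerProductSpace ℝ V]

theorem IsSymmetric.inner_bdf2_apply {T : V →ₗ[ℝ] V} (hT : T.IsSymmetric) (c b d : V) :
    ⟪((3:ℝ)/2) • c - (2:ℝ) • b + ((1:ℝ)/2) • d, T c⟫
      = (1/4) * (⟪c, T c⟫ + ⟪(2:ℝ) • c - b, T ((2:ℝ) • c - b)⟫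
          - ⟪b, T b⟫ - ⟪(2:ℝ) • b - d, T ((2:ℝ) • b - d)⟫
          + ⟪c - (2:ℝ) • b + d, T (c - (2:ℝ) • b + d)⟫) := by
  have hbc : ⟪b, T c⟫ = ⟪c, T b⟫ := by rw [← hT, real_inner_comm]
  have hdc : ⟪d, T c⟫ = ⟪c, T d⟫ := by rw [← hT, real_inner_comm]
  simp only [map_add, map_sub, map_smul, inner_add_left, inner_add_right, inner_sub_left,
    inner_sub_right, real_inner_smul_left, real_inner_smul_right]
  linear_combination (-1 : ℝ) * hbc + (1/4) * hdc

theorem IsSymmetric.inner_smul_id_add_comp_self_apply {Δ : V →ₗ[ℝ] V} (hΔ : Δ.IsSymmetric)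
    (a : ℝ) (v w : V) :
    ⟪v, (a • LinearMap.id + Δ ∘ₗ Δ : V →ₗ[ℝ] V) w⟫ = a * ⟪v, w⟫ + ⟪Δ v, Δ w⟫ := by
  rw [add_apply, smul_apply, id_apply, comp_apply, inner_add_right, real_inner_smul_right, hΔ]

theorem IsSymmetric.smul_id_add_comp_self_s9 {Δ : V →ₗ[ℝ] V} (hΔ : Δ.IsSymmetric) (a : ℝ) :
    (a • LinearMap.id + Δ ∘ₗ Δ).IsSymmetric := fun v w => by
  rw [real_inner_comm, hΔ.inner_smul_id_add_comp_self_apply,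
    hΔ.inner_smul_id_add_comp_self_apply, real_inner_comm w, real_inner_comm (Δ w)]

end LinearMap

section BDF2SAV

variable {V : Type*} [NormedAddCommGroup V] [InnerProductSpace ℝ V]

/-- The paper's modified energy at time level `n + 1`. -/
noncomputable def bdf2SavEnergy (L : V →ₗ[ℝ] V) (φ : ℕ → V) (r : ℕ → ℝ) (n : ℕ) : ℝ :=
  (1/4) * (⟪φ (n+1), L (φ (n+1))⟫ + ⟪(2:ℝ) • φ (n+1) - φ n, L ((2:ℝ) • φ (n+1) - φ n)⟫)
    + (1/2) * (r (n+1) ^ 2 + (2 * r (n+1) - r n) ^ 2)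

variable {L : V →ₗ[ℝ] V}

theorem bdf2SavEnergy_succ_le (hL : L.IsSymmetric) (hL_nonneg : ∀ v, 0 ≤ ⟪v, L v⟫)
    {Δ : V →ₗ[ℝ] V} (hΔ : ∀ v, ⟪v, Δ v⟫ ≤ 0) {dt : ℝ} (hdt : 0 ≤ dt) {φ : ℕ → V} {r : ℕ → ℝ} {n : ℕ}
    (hstep : ∃ (nhat : V) (E : ℝ), 0 < E ∧
      (((3:ℝ)/2) • φ (n+2) - (2:ℝ) • φ (n+1) + ((1:ℝ)/2) • φ n
          = dt • Δ ((r (n+2) / Real.sqrt E) • nhat + L (φ (n+2)))) ∧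
      ((3/2) * r (n+2) - 2 * r (n+1) + (1/2) * r n
          = (1 / (2 * Real.sqrt E)) *
            ⟪nhat, ((3:ℝ)/2) • φ (n+2) - (2:ℝ) • φ (n+1) + ((1:ℝ)/2) • φ n⟫)) :
    bdf2SavEnergy L φ r (n+1) ≤ bdf2SavEnergy L φ r n := by
  obtain ⟨nhat, E, hE, hφ, hr⟩ := hstep
  set D := ((3:ℝ)/2) • φ (n+2) - (2:ℝ) • φ (n+1) + ((1:ℝ)/2) • φ n with hD
  set μ := (r (n+2) / Real.sqrt E) • nhat + L (φ (n+2)) with hμ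
  have hsqrt : Real.sqrt E ≠ 0 := (Real.sqrt_pos.2 hE).ne'
  have h_dissip : ⟪D, μ⟫ ≤ 0 := by
    rw [hφ, real_inner_smul_left, real_inner_comm]
    exact mul_nonpos_of_nonneg_of_nonpos hdt (hΔ μ)
  have h_sav : (r (n+2) / Real.sqrt E) * ⟪D, nhat⟫
      = 2 * r (n+2) * ((3/2) * r (n+2) - 2 * r (n+1) + (1/2) * r n) := by
    rw [real_inner_comm, hr]
    field_simp
  rw [hμ, inner_add_right, real_inner_smul_right, h_sav, hD, hL.inner_bdf2_apply] at h_dissip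
  have h_rem_φ := hL_nonneg (φ (n+2) - (2:ℝ) • φ (n+1) + φ n)
  have h_rem_r := sq_nonneg (r (n+2) - 2 * r (n+1) + r n)
  unfold bdf2SavEnergy
  linarith

theorem inner_apply_self_le_four_mul_bdf2SavEnergy (hL_nonneg : ∀ v, 0 ≤ ⟪v, L v⟫)
    (φ : ℕ → V) (r : ℕ → ℝ) (n : ℕ) :
    ⟪φ (n+1), L (φ (n+1))⟫ ≤ 4 * bdf2SavEnergy L φ r n := by
  unfold bdf2SavEnergy
  nlinarith [hL_nonneg ((2:ℝ) • φ (n+1) - φ n), sq_nonneg (r (n+1)),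
    sq_nonneg (2 * r (n+1) - r n)]

theorem sq_le_two_mul_bdf2SavEnergy (hL_nonneg : ∀ v, 0 ≤ ⟪v, L v⟫)
    (φ : ℕ → V) (r : ℕ → ℝ) (n : ℕ) :
    r (n+1) ^ 2 ≤ 2 * bdf2SavEnergy L φ r n := by
  unfold bdf2SavEnergy
  nlinarith [hL_nonneg (φ (n+1)), hL_nonneg ((2:ℝ) • φ (n+1) - φ n),
    sq_nonneg (2 * r (n+1) - r n)]

end BDF2SAV

theorem norm_sq_sub_inner_add_norm_sq_le {V : Type*} [NormedAddCommGroup V]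
    [InnerProductSpace ℝ V] {a : ℝ} (ha0 : 0 < a) (ha1 : a ≤ 1) (x y : V) :
    ‖x‖ ^ 2 - ⟪x, y⟫ + ‖y‖ ^ 2 ≤ 3/2 * (a * ‖x‖ ^ 2 + ‖y‖ ^ 2) / a := by
  have h_inner : -⟪x, y⟫ ≤ (‖x‖ ^ 2 + ‖y‖ ^ 2) / 2 := by
    nlinarith [norm_add_sq_real x y, sq_nonneg ‖x + y‖]
  rw [le_div_iff₀ ha0]
  nlinarith [mul_le_mul_of_nonneg_left h_inner ha0.le,
    mul_le_of_le_one_left (sq_nonneg ‖y‖) ha1]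

theorem sav_scheme_uniform_H2_bound_general
    {V : Type*} [NormedAddCommGroup V] [InnerProductSpace ℝ V]
    (Δ : V →ₗ[ℝ] V) (hΔsym : Δ.IsSymmetric)
    (hΔneg : ∀ v : V, (inner ℝ v (Δ v) : ℝ) ≤ 0)
    (a : ℝ) (ha0 : 0 < a) (ha1 : a ≤ 1)
    (L : V →ₗ[ℝ] V) (hL : L = a • LinearMap.id + Δ ∘ₗ Δ)
    (dt : ℝ) (hdt : 0 < dt)
    (φ : ℕ → V) (r : ℕ → ℝ)
    (hscheme : ∀ n : ℕ, ∃ (nhat : V) (E : ℝ), 0 < E ∧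
      (((3:ℝ)/2) • φ (n+2) - (2:ℝ) • φ (n+1) + ((1:ℝ)/2) • φ n
          = dt • Δ ((r (n+2) / Real.sqrt E) • nhat + L (φ (n+2)))) ∧
      ((3/2) * r (n+2) - 2 * r (n+1) + (1/2) * r n
          = (1 / (2 * Real.sqrt E)) *
            (inner ℝ nhat
              (((3:ℝ)/2) • φ (n+2) - (2:ℝ) • φ (n+1) + ((1:ℝ)/2) • φ n) : ℝ)))
    (C0 : ℝ)
    (hinit : (1/4) * ((inner ℝ (φ 1) (L (φ 1)) : ℝ)
          + (inner ℝ ((2:ℝ) • φ 1 - φ 0) (L ((2:ℝ) • φ 1 - φ 0)) : ℝ))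
        + (1/2) * ((r 1)^2 + (2 * r 1 - r 0)^2) ≤ C0) :
    ∀ m : ℕ, 1 ≤ m →
      (a * ‖φ m‖^2 + ‖Δ (φ m)‖^2 ≤ 4 * C0) ∧
      ((r m)^2 ≤ 2 * C0) ∧
      (‖φ m‖^2 - (inner ℝ (φ m) (Δ (φ m)) : ℝ) + ‖Δ (φ m)‖^2 ≤ 6 * C0 / a) := by
  have hL_quad : ∀ v, ⟪v, L v⟫ = a * ‖v‖ ^ 2 + ‖Δ v‖ ^ 2 := fun v => by
    rw [hL, hΔsym.inner_smul_id_add_comp_self_apply, real_inner_self_eq_norm_sq,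
      real_inner_self_eq_norm_sq]
  have hL_nonneg : ∀ v, 0 ≤ ⟪v, L v⟫ := fun v => by rw [hL_quad]; positivity
  have hL_sym : L.IsSymmetric := hL ▸ hΔsym.smul_id_add_comp_self_s9 a
  have h_energy : ∀ n, bdf2SavEnergy L φ r n ≤ C0 := fun n =>
    (antitone_nat_of_succ_le (fun k => bdf2SavEnergy_succ_le hL_sym hL_nonneg hΔneg hdt.le
      (hscheme k)) n.zero_le).trans hinit
  intro m hm
  obtain ⟨n, rfl⟩ := Nat.exists_eq_add_of_le' hm
  have h_H2 : a * ‖φ (n+1)‖ ^ 2 + ‖Δ (φ (n+1))‖ ^ 2 ≤ 4 * C0 := by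
    rw [← hL_quad]
    linarith [inner_apply_self_le_four_mul_bdf2SavEnergy hL_nonneg φ r n, h_energy n]
  refine ⟨h_H2, by linarith [sq_le_two_mul_bdf2SavEnergy hL_nonneg φ r n, h_energy n], ?_⟩
  calc _ ≤ 3/2 * (a * ‖φ (n+1)‖ ^ 2 + ‖Δ (φ (n+1))‖ ^ 2) / a :=
        norm_sq_sub_inner_add_norm_sq_le ha0 ha1 _ _
    _ ≤ 3/2 * (4 * C0) / a := by gcongr
    _ = 6 * C0 / a := by ring

/-- Corollary 3.1 (with Remark 3.1): uniform-in-time discrete H² bound for the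
numerical solution of the BDF2 SAV scheme, together with the bound on the
scalar auxiliary variable. -/
theorem sav_scheme_uniform_H2_bound
    {V : Type*} [NormedAddCommGroup V] [InnerProductSpace ℝ V]
    [FiniteDimensional ℝ V]
    (Δ : V →ₗ[ℝ] V) (hΔsym : Δ.IsSymmetric)
    (hΔneg : ∀ v : V, (inner ℝ v (Δ v) : ℝ) ≤ 0)
    (a : ℝ) (ha0 : 0 < a) (ha1 : a ≤ 1)
    (L : V →ₗ[ℝ] V) (hL : L = a • LinearMap.id + Δ ∘ₗ Δ)
    (dt : ℝ) (hdt : 0 < dt)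
    (φ : ℕ → V) (r : ℕ → ℝ)
    (hscheme : ∀ n : ℕ, ∃ (nhat : V) (E : ℝ), 0 < E ∧
      (((3:ℝ)/2) • φ (n+2) - (2:ℝ) • φ (n+1) + ((1:ℝ)/2) • φ n
          = dt • Δ ((r (n+2) / Real.sqrt E) • nhat + L (φ (n+2)))) ∧
      ((3/2) * r (n+2) - 2 * r (n+1) + (1/2) * r n
          = (1 / (2 * Real.sqrt E)) *
            (inner ℝ nhat
              (((3:ℝ)/2) • φ (n+2) - (2:ℝ) • φ (n+1) + ((1:ℝ)/2) • φ n) : ℝ)))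
    (C0 : ℝ)
    (hinit : (1/4) * ((inner ℝ (φ 1) (L (φ 1)) : ℝ)
          + (inner ℝ ((2:ℝ) • φ 1 - φ 0) (L ((2:ℝ) • φ 1 - φ 0)) : ℝ))
        + (1/2) * ((r 1)^2 + (2 * r 1 - r 0)^2) ≤ C0) :
    ∀ m : ℕ, 1 ≤ m →
      (a * ‖φ m‖^2 + ‖Δ (φ m)‖^2 ≤ 4 * C0) ∧
      ((r m)^2 ≤ 2 * C0) ∧
      (‖φ m‖^2 - (inner ℝ (φ m) (Δ (φ m)) : ℝ) + ‖Δ (φ m)‖^2 ≤ 6 * C0 / a) :=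
  sav_scheme_uniform_H2_bound_general Δ hΔsym hΔneg a ha0 ha1 L hL dt hdt φ r hscheme C0 hinit
end

section
/- Let V be a finite-dimensional real inner product space and let Δ : V →ₗ[ℝ] V be self-adjoint with ⟪v, Δ v⟫ ≤ 0 for all v ∈ V. Then for every f ∈ V: ( −⟪Δ f, Δ(Δ f)⟫ )³ ≤ ‖Δ f‖⁴ · ( −⟪Δ²f, Δ(Δ²f)⟫ ), where Δ²f := Δ(Δ f). -/
/-!
With `T = -Δ` and `g = Δ f` the claim reads `⟪g, T g⟫³ ≤ ‖g‖⁴ ⟪T g, T (T g)⟫` for a positive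
operator `T`. It follows from two Cauchy–Schwarz inequalities: `⟪g, T g⟫ ≤ ‖g‖ ‖T g‖` for the inner
product, and `‖T g‖⁴ = ⟪g, T (T g)⟫² ≤ ⟪g, T g⟫ ⟪T g, T (T g)⟫` for the semi-inner product
`(x, y) ↦ ⟪x, T y⟫`. Chaining the fourth power of the first with the second and cancelling
`⟪g, T g⟫` gives the claim.
-/

namespace LinearMap.IsPositive

variable {V : Type*} [NormedAddCommGroup V] [InnerProductSpace ℝ V] {T : V →ₗ[ℝ] V}

theorem real_inner_apply_sq_le (hT : T.IsPositive) (x y : V) :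
    inner ℝ x (T y) ^ 2 ≤ inner ℝ x (T x) * inner ℝ y (T y) := by
  have h := BilinForm.apply_mul_apply_le_of_forall_zero_le
    ((innerₗ V).compl₂ T) hT.inner_nonneg_right x y
  simp only [compl₂_apply, innerₗ_apply_apply] at h
  rwa [(real_inner_comm (T x) y).trans (hT.isSymmetric x y), ← sq] at h

theorem real_inner_apply_pow_three_le (hT : T.IsPositive) (g : V) :
    inner ℝ g (T g) ^ 3 ≤ ‖g‖ ^ 4 * inner ℝ (T g) (T (T g)) := by
  set a := inner ℝ g (T g)
  have ha : 0 ≤ a := hT.inner_nonneg_right g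
  have hle : a ≤ ‖g‖ * ‖T g‖ := real_inner_le_norm g (T g)
  have hsq : ‖T g‖ ^ 4 ≤ a * inner ℝ (T g) (T (T g)) := by
    have h := hT.real_inner_apply_sq_le g (T g)
    rwa [← hT.isSymmetric, real_inner_self_eq_norm_sq, ← pow_mul] at h
  have h4 : a ^ 3 * a ≤ ‖g‖ ^ 4 * inner ℝ (T g) (T (T g)) * a := calc
    a ^ 3 * a = a ^ 4 := by ring
    _ ≤ (‖g‖ * ‖T g‖) ^ 4 := by gcongr
    _ = ‖g‖ ^ 4 * ‖T g‖ ^ 4 := mul_pow _ _ _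
    _ ≤ ‖g‖ ^ 4 * (a * inner ℝ (T g) (T (T g))) := by gcongr
    _ = ‖g‖ ^ 4 * inner ℝ (T g) (T (T g)) * a := by ring
  rcases ha.eq_or_lt with ha0 | hapos
  · rw [← ha0, zero_pow three_ne_zero]
    exact mul_nonneg (by positivity) (hT.inner_nonneg_right (T g))
  · exact le_of_mul_le_mul_right h4 hapos

end LinearMap.IsPositive

theorem discrete_interpolation_inequality_general
    {V : Type*} [NormedAddCommGroup V] [InnerProductSpace ℝ V]
    (Δ : V →ₗ[ℝ] V) (hΔsym : Δ.IsSymmetric)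
    (hΔneg : ∀ v : V, (inner ℝ v (Δ v) : ℝ) ≤ 0)
    (f : V) :
    (-(inner ℝ (Δ f) (Δ (Δ f)) : ℝ))^3
      ≤ ‖Δ f‖^4 * (-(inner ℝ (Δ (Δ f)) (Δ (Δ (Δ f))) : ℝ)) := by
  have hpos : (-Δ).IsPositive := (LinearMap.isPositive_iff _).mpr
    ⟨fun x y ↦ by simp [hΔsym x y], fun v ↦ by simpa [real_inner_comm] using hΔneg v⟩
  simpa using hpos.real_inner_apply_pow_three_le (Δ f)

/-- Interpolation inequality `‖∇Δf‖ ≤ ‖Δf‖^{2/3}·‖∇Δ²f‖^{1/3}` in cubed form,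
with the gradient norm realized through `‖∇g‖² = −⟪g, Δg⟫`. -/
theorem discrete_interpolation_inequality
    {V : Type*} [NormedAddCommGroup V] [InnerProductSpace ℝ V]
    [FiniteDimensional ℝ V]
    (Δ : V →ₗ[ℝ] V) (hΔsym : Δ.IsSymmetric)
    (hΔneg : ∀ v : V, (inner ℝ v (Δ v) : ℝ) ≤ 0)
    (f : V) :
    (-(inner ℝ (Δ f) (Δ (Δ f)) : ℝ))^3
      ≤ ‖Δ f‖^4 * (-(inner ℝ (Δ (Δ f)) (Δ (Δ (Δ f))) : ℝ)) :=
  discrete_interpolation_inequality_general Δ hΔsym hΔneg f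
end
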